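/- (Newton correction step.) Let f ∈ ℂ⟦x⟧ have zero constant coefficient, let n ≥ 1, let g₀ ∈ ℂ⟦x⟧ have constant coefficient 1, and let h ∈ ℂ⟦x⟧ satisfy h ≡ 0 (mod x^n). If δ(g₀) ≡ g₀ · (δ(f) + δ(h)) (mod x^{2n}), then exp(f) ≡ g₀ · (1 − h) (mod x^{2n}). -/

import Mathlib

open PowerSeries

/-- `exp(f)`: substitution of `f` (with nilpotent, i.e. zero, constant coefficient)
into the exponential series `Σ_{n≥0} xⁿ/n!`.  Since the constant coefficient of `f`
vanishes, the coefficient of degree `d` only receives contributions from `f^n` with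
`n ≤ d`, so the following finite sum computes it. -/
noncomputable def expPS (f : PowerSeries ℂ) : PowerSeries ℂ :=
  PowerSeries.mk fun d => ∑ n ∈ Finset.range (d + 1),
    PowerSeries.coeff d (f ^ n) / (n.factorial : ℂ)

/-- The operator `δh = x · h′`, where `h′` is the formal derivative. -/
noncomputable def delta (h : PowerSeries ℂ) : PowerSeries ℂ :=
  PowerSeries.X * h.derivativeFun

/-- `a ≡ b (mod x^N)`: the coefficients of `a` and `b` agree in every degree `< N`. -/
def modX (N : ℕ) (a b : PowerSeries ℂ) : Prop :=
  ∀ i < N, PowerSeries.coeff i a = PowerSeries.coeff i b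

/-- The `k`-th block (of size `m`) of a power series: the polynomial (as a power
series) of degree `< m` whose coefficient of `x^j` is the coefficient of `x^{km+j}`. -/
noncomputable def blk (m k : ℕ) (h : PowerSeries ℂ) : PowerSeries ℂ :=
  PowerSeries.mk fun j => if j < m then PowerSeries.coeff (k * m + j) h else 0

/-!
Both `exp(f)` and `g₀ · (1 − h)` have constant coefficient `1` and solve `δy ≡ δf · y`
modulo `x^{2n}`: the first exactly, by the chain rule and `exp′ = exp`; for the second, the
hypothesis leaves only the error term `g₀ · δh · h`, divisible by `x^n · x^n`. Solutions of
`δy ≡ c · y (mod x^N)` with `c(0) = 0` are determined modulo `x^N` by their constant term,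
since `δ` multiplies the coefficient of `x^i` by `i` while the `i`-th coefficient of `c · y`
only involves lower coefficients of `y`.
-/

lemma modX_iff_X_pow_dvd_sub {N : ℕ} {a b : PowerSeries ℂ} :
    modX N a b ↔ X ^ N ∣ a - b := by
  simp only [modX, X_pow_dvd_iff, map_sub, sub_eq_zero]

lemma delta_eq_X_mul_derivative (p : PowerSeries ℂ) : delta p = X * derivative ℂ p :=
  rfl

lemma coeff_delta (p : PowerSeries ℂ) (i : ℕ) : coeff i (delta p) = i * coeff i p := by
  cases i with
  | zero => simp [delta_eq_X_mul_derivative]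
  | succ i =>
    rw [delta_eq_X_mul_derivative, coeff_succ_X_mul, coeff_derivative]
    push_cast
    ring

lemma constantCoeff_delta (p : PowerSeries ℂ) : constantCoeff (delta p) = 0 := by
  simp [delta_eq_X_mul_derivative]

lemma delta_one : delta 1 = 0 := by
  simp [delta_eq_X_mul_derivative]

lemma delta_sub (a b : PowerSeries ℂ) : delta (a - b) = delta a - delta b := by
  simp only [delta_eq_X_mul_derivative, map_sub, mul_sub]

lemma delta_mul (a b : PowerSeries ℂ) : delta (a * b) = delta a * b + a * delta b := by
  simp only [delta_eq_X_mul_derivative, Derivation.leibniz, smul_eq_mul]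
  ring

lemma X_pow_dvd_delta {N : ℕ} {p : PowerSeries ℂ} (hp : X ^ N ∣ p) : X ^ N ∣ delta p := by
  rw [X_pow_dvd_iff] at hp ⊢
  intro i hi
  rw [coeff_delta, hp i hi, mul_zero]

lemma expPS_eq_subst_exp {f : PowerSeries ℂ} (hf : constantCoeff f = 0) :
    expPS f = (exp ℂ).subst f := by
  ext d
  rw [expPS, coeff_mk, coeff_subst' (HasSubst.of_constantCoeff_zero' hf),
    finsum_eq_sum_of_support_subset (s := Finset.range (d + 1))]
  · refine Finset.sum_congr rfl fun k _ => ?_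
    simp [coeff_exp, div_eq_inv_mul]
  · intro k hk
    rw [Finset.coe_range, Set.mem_Iio, Nat.lt_succ_iff]
    by_contra! hdk
    have hfk : X ^ k ∣ f ^ k := pow_dvd_pow_of_dvd (X_dvd_iff.mpr hf) k
    exact hk (by simp only [X_pow_dvd_iff.mp hfk d hdk, smul_zero])

lemma constantCoeff_expPS (f : PowerSeries ℂ) : constantCoeff (expPS f) = 1 := by
  rw [← coeff_zero_eq_constantCoeff_apply, expPS, coeff_mk]
  simp

lemma delta_expPS {f : PowerSeries ℂ} (hf : constantCoeff f = 0) :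
    delta (expPS f) = delta f * expPS f := by
  rw [delta_eq_X_mul_derivative, delta_eq_X_mul_derivative, expPS_eq_subst_exp hf,
    derivative_subst (HasSubst.of_constantCoeff_zero' hf), derivative_exp]
  ring

section Uniqueness

variable {N : ℕ} {c : PowerSeries ℂ}

lemma X_pow_dvd_of_dvd_delta_sub_mul {p : PowerSeries ℂ} (hc : constantCoeff c = 0)
    (hp : constantCoeff p = 0) (hδ : X ^ N ∣ delta p - c * p) : X ^ N ∣ p := by
  rw [X_pow_dvd_iff] at hδ ⊢
  intro i
  induction i using Nat.strong_induction_on with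
  | _ i ih =>
    intro hi
    obtain rfl | hi0 := eq_or_ne i 0
    · simpa using hp
    have hcp : coeff i (c * p) = 0 := by
      have hXp : X ^ i ∣ p := X_pow_dvd_iff.mpr fun m hm => ih m hm (hm.trans hi)
      have hXcp : X ^ (i + 1) ∣ c * p := by
        rw [pow_succ']
        exact mul_dvd_mul (X_dvd_iff.mpr hc) hXp
      exact X_pow_dvd_iff.mp hXcp i (Nat.lt_succ_self i)
    have hcoeff := hδ i hi
    rw [map_sub, hcp, sub_zero, coeff_delta] at hcoeff
    exact (mul_eq_zero.mp hcoeff).resolve_left (Nat.cast_ne_zero.mpr hi0)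

lemma X_pow_dvd_sub_of_dvd_delta_sub_mul {a b : PowerSeries ℂ} (hc : constantCoeff c = 0)
    (h0 : constantCoeff a = constantCoeff b)
    (ha : X ^ N ∣ delta a - c * a) (hb : X ^ N ∣ delta b - c * b) :
    X ^ N ∣ a - b := by
  refine X_pow_dvd_of_dvd_delta_sub_mul hc (by rw [map_sub, h0, sub_self]) ?_
  convert dvd_sub ha hb using 1
  rw [delta_sub]
  ring

end Uniqueness

/-- Newton correction step: if `f` has zero constant coefficient, `n ≥ 1`, `g₀` has
constant coefficient `1`, `h ≡ 0 (mod x^n)`, and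
`δ(g₀) ≡ g₀ · (δ(f) + δ(h)) (mod x^{2n})`, then
`exp(f) ≡ g₀ · (1 − h) (mod x^{2n})`. -/
theorem newton_correction (f g₀ h : PowerSeries ℂ) (n : ℕ)
    (hf : PowerSeries.constantCoeff f = 0) (hn : 1 ≤ n)
    (hg₀ : PowerSeries.constantCoeff g₀ = 1)
    (hh : modX n h 0)
    (hmain : modX (2 * n) (delta g₀) (g₀ * (delta f + delta h))) :
    modX (2 * n) (expPS f) (g₀ * (1 - h)) := by
  rw [modX_iff_X_pow_dvd_sub, sub_zero] at hh
  rw [modX_iff_X_pow_dvd_sub] at hmain ⊢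
  have hh0 : constantCoeff h = 0 := X_dvd_iff.mp ((dvd_pow_self X (by omega)).trans hh)
  refine X_pow_dvd_sub_of_dvd_delta_sub_mul (constantCoeff_delta f) ?_ ?_ ?_
  · simp [constantCoeff_expPS, hg₀, hh0]
  · rw [delta_expPS hf, sub_self]
    exact dvd_zero _
  · have hsplit : delta (g₀ * (1 - h)) - delta f * (g₀ * (1 - h)) =
        (delta g₀ - g₀ * (delta f + delta h)) * (1 - h) - g₀ * (delta h * h) := by
      rw [delta_mul, delta_sub, delta_one]
      ring
    rw [hsplit]
    refine dvd_sub (dvd_mul_of_dvd_left hmain _) (dvd_mul_of_dvd_right ?_ _)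
    rw [two_mul, pow_add]
    exact mul_dvd_mul (X_pow_dvd_delta hh) hh
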